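/- Define statistics on S_n: S₁(π) = number of non-inversions (i,j), i<j, π(i)<π(j), such that no entry between positions i and j exceeds π(j) [occurrences of mesh pattern (12,{(1,2)})]; S₂ analogously for inversions; T₁(π) = occurrences of the mesh pattern (132, {(1,3),(2,3)}); T₂(π) = occurrences of (231, {(1,3),(2,3)}). Let F_n = ∑_{π∈S_n} p₁^{S₁(π)} p₂^{S₂(π)} q₁^{T₁(π)} q₂^{T₂(π)}. Then F_{n+1} = ∑_{k=0}^{n} qbin(n, k; q₁, q₂) · p₁^k p₂^{n-k} · F_k · F_{n-k}, where qbin(n,k;q₁,q₂) is the (q₁,q₂)-binomial coefficient [n]!/([k]![n-k]!) with [m] = q₁^{m-1} + q₁^{m-2}q₂ + ⋯ + q₂^{m-1}. -/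

import Mathlib

open Finset

variable {F : Type*} [Field F]

/-- The `(q₁,q₂)`-integer `[m] = q₁^{m-1} + q₁^{m-2}q₂ + ⋯ + q₂^{m-1}`. -/
def qint (q₁ q₂ : F) (m : ℕ) : F := ∑ a ∈ range m, q₁ ^ a * q₂ ^ (m - 1 - a)

/-- The `(q₁,q₂)`-factorial `[m]! = [1][2]⋯[m]`. -/
def qfac (q₁ q₂ : F) (m : ℕ) : F := ∏ i ∈ range m, qint q₁ q₂ (i + 1)

/-- The `(q₁,q₂)`-binomial coefficient `[n]!/([k]![n-k]!)`. -/
def qbin (q₁ q₂ : F) (n k : ℕ) : F := qfac q₁ q₂ n / (qfac q₁ q₂ k * qfac q₁ q₂ (n - k))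

/-- `S₁(π)`: non-inversions `(i,j)` (`i < j`, `π(i) < π(j)`) such that no entry
strictly between positions `i` and `j` exceeds `π(j)` — mesh pattern `(12,{(1,2)})`. -/
def S1 {n : ℕ} (π : Equiv.Perm (Fin n)) : ℕ :=
  (univ.filter fun p : Fin n × Fin n =>
    p.1 < p.2 ∧ π p.1 < π p.2 ∧
    ∀ a : Fin n, p.1 < a → a < p.2 → ¬ (π p.2 < π a)).card

/-- `S₂(π)`: inversions `(i,j)` (`i < j`, `π(i) > π(j)`) such that no entry strictly
between positions `i` and `j` exceeds `π(i)` — mesh pattern `(21,{(1,2)})`. -/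
def S2 {n : ℕ} (π : Equiv.Perm (Fin n)) : ℕ :=
  (univ.filter fun p : Fin n × Fin n =>
    p.1 < p.2 ∧ π p.2 < π p.1 ∧
    ∀ a : Fin n, p.1 < a → a < p.2 → ¬ (π p.1 < π a)).card

/-- `T₁(π)`: occurrences of the mesh pattern `(132, {(1,3),(2,3)})`: triples
`i < j < k` with `π(i) < π(k) < π(j)` and no entry strictly between positions `i`
and `k` exceeding `π(j)`. -/
def T1 {n : ℕ} (π : Equiv.Perm (Fin n)) : ℕ :=
  (univ.filter fun t : Fin n × Fin n × Fin n =>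
    t.1 < t.2.1 ∧ t.2.1 < t.2.2 ∧ π t.1 < π t.2.2 ∧ π t.2.2 < π t.2.1 ∧
    ∀ a : Fin n, t.1 < a → a < t.2.2 → ¬ (π t.2.1 < π a)).card

/-- `T₂(π)`: occurrences of the mesh pattern `(231, {(1,3),(2,3)})`: triples
`i < j < k` with `π(k) < π(i) < π(j)` and no entry strictly between positions `i`
and `k` exceeding `π(j)`. -/
def T2 {n : ℕ} (π : Equiv.Perm (Fin n)) : ℕ :=
  (univ.filter fun t : Fin n × Fin n × Fin n =>
    t.1 < t.2.1 ∧ t.2.1 < t.2.2 ∧ π t.2.2 < π t.1 ∧ π t.1 < π t.2.1 ∧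
    ∀ a : Fin n, t.1 < a → a < t.2.2 → ¬ (π t.2.1 < π a)).card

/-- `F_n = ∑_{π ∈ S_n} p₁^{S₁(π)} p₂^{S₂(π)} q₁^{T₁(π)} q₂^{T₂(π)}`. -/
def Fgen (p₁ p₂ q₁ q₂ : F) (n : ℕ) : F :=
  ∑ π : Equiv.Perm (Fin n), p₁ ^ S1 π * p₂ ^ S2 π * q₁ ^ T1 π * q₂ ^ T2 π

/-! Split `π ∈ S_{n+1}` at its maximum, `π = L (n+1) R`, and let `A` be the set of values of `L`.
Standardising `L` and `R` gives `(σ, τ) ∈ S_k × S_{n-k}` with `k = |A|`, and `(A, σ, τ) ↦ π` is a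
bijection. An occurrence of one of the four mesh patterns either lies inside `L` or inside `R`,
or uses the maximum in the role forced by the shaded boxes: this adds `k` to `S₁`, `n - k` to
`S₂`, and to `T₁`, `T₂` the numbers of pairs `(a, b) ∈ A × Aᶜ` with `a < b`, resp. `b < a`.
Summed over the `k`-subsets `A`, the latter weights give the `(q₁,q₂)`-binomial coefficient,
because both satisfy the same Pascal recursion (remove the largest element of the ground set). -/

section QBinomial

variable (q₁ q₂ : F)

lemma qint_add (a b : ℕ) : qint q₁ q₂ (a + b) = q₂ ^ b * qint q₁ q₂ a + q₁ ^ a * qint q₁ q₂ b := by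
  simp only [qint, sum_range_add, mul_sum]
  congr 1 <;> refine sum_congr rfl fun i hi => ?_ <;> rw [mem_range] at hi
  · rw [show a + b - 1 - i = b + (a - 1 - i) by omega, pow_add]; ring
  · rw [show a + b - 1 - (a + i) = b - 1 - i by omega, pow_add]; ring

@[simp] lemma qfac_zero : qfac q₁ q₂ 0 = 1 := prod_range_zero _

lemma qfac_succ (m : ℕ) : qfac q₁ q₂ (m + 1) = qfac q₁ q₂ m * qint q₁ q₂ (m + 1) :=
  prod_range_succ _ _

variable {q₁ q₂} (hq : ∀ m : ℕ, 1 ≤ m → qint q₁ q₂ m ≠ 0)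
include hq

lemma qfac_ne_zero (m : ℕ) : qfac q₁ q₂ m ≠ 0 :=
  prod_ne_zero_iff.mpr fun i _ => hq (i + 1) (Nat.le_add_left _ _)

lemma qbin_zero_right (n : ℕ) : qbin q₁ q₂ n 0 = 1 := by
  rw [qbin, Nat.sub_zero, qfac_zero, one_mul, div_self (qfac_ne_zero hq n)]

lemma qbin_self (n : ℕ) : qbin q₁ q₂ n n = 1 := by
  rw [qbin, Nat.sub_self, qfac_zero, mul_one, div_self (qfac_ne_zero hq n)]

lemma qbin_succ_succ {n k : ℕ} (hk : k < n) :
    qbin q₁ q₂ (n + 1) (k + 1) =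
      q₂ ^ (n - k) * qbin q₁ q₂ n k + q₁ ^ (k + 1) * qbin q₁ q₂ n (k + 1) := by
  obtain ⟨m, rfl⟩ : ∃ m, n = k + 1 + m := ⟨n - (k + 1), by omega⟩
  have hsplit := qint_add q₁ q₂ (k + 1) (m + 1)
  rw [show k + 1 + (m + 1) = k + 1 + m + 1 by ring] at hsplit
  simp only [qbin, show k + 1 + m + 1 - (k + 1) = m + 1 by omega,
    show k + 1 + m - k = m + 1 by omega, show k + 1 + m - (k + 1) = m by omega,
    qfac_succ, hsplit]
  have := qfac_ne_zero hq k
  have := qfac_ne_zero hq m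
  have := hq (k + 1) (by omega)
  have := hq (m + 1) (by omega)
  field_simp

end QBinomial

section CrossCounts

variable {α : Type*} [LinearOrder α]

/-- With `k = #A`, `n = #s`: `downCross s A` is the paper's `γ(A)` and `upCross s A` is
`k(n-k) - γ(A)`. -/
def upCross (s A : Finset α) : ℕ := ∑ a ∈ A, #{b ∈ s \ A | a < b}

def downCross (s A : Finset α) : ℕ := ∑ a ∈ A, #{b ∈ s \ A | b < a}

variable {s A : Finset α} {M : α}

lemma upCross_insert_max (hM : ∀ x ∈ s, x < M) (hA : A ⊆ s) :
    upCross (insert M s) A = upCross s A + #A := by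
  rw [upCross, upCross, insert_sdiff_of_notMem s fun h => (hM M (hA h)).false, card_eq_sum_ones,
    ← sum_add_distrib]
  refine sum_congr rfl fun a ha => ?_
  rw [filter_insert, if_pos (hM a (hA ha)), card_insert_of_notMem]
  exact fun h => (hM M (mem_sdiff.mp (mem_filter.mp h).1).1).false

lemma downCross_insert_max (hM : ∀ x ∈ s, x < M) (hA : A ⊆ s) :
    downCross (insert M s) A = downCross s A := by
  rw [downCross, downCross, insert_sdiff_of_notMem s fun h => (hM M (hA h)).false]
  refine sum_congr rfl fun a ha => ?_
  rw [filter_insert, if_neg (hM a (hA ha)).asymm]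

lemma upCross_insert_max_insert (hM : ∀ x ∈ s, x < M) (hA : A ⊆ s) :
    upCross (insert M s) (insert M A) = upCross s A := by
  rw [upCross, upCross, insert_sdiff_insert, sdiff_insert_of_notMem fun h => (hM M h).false,
    sum_insert fun h => (hM M (hA h)).false,
    filter_false_of_mem fun b hb => (hM b (mem_sdiff.mp hb).1).asymm, card_empty, zero_add]

lemma downCross_insert_max_insert (hM : ∀ x ∈ s, x < M) (hA : A ⊆ s) :
    downCross (insert M s) (insert M A) = downCross s A + #(s \ A) := by
  rw [downCross, downCross, insert_sdiff_insert, sdiff_insert_of_notMem fun h => (hM M h).false,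
    sum_insert fun h => (hM M (hA h)).false,
    filter_true_of_mem fun b hb => hM b (mem_sdiff.mp hb).1, add_comm]

end CrossCounts

section GaussianSubsetSum

variable {α : Type*} [LinearOrder α] (q₁ q₂ : F)

def qSubsetSum (s : Finset α) (k : ℕ) : F :=
  ∑ A ∈ powersetCard k s, q₁ ^ upCross s A * q₂ ^ downCross s A

lemma qSubsetSum_zero (s : Finset α) : qSubsetSum q₁ q₂ s 0 = 1 := by
  simp [qSubsetSum, upCross, downCross]

lemma qSubsetSum_insert_max_succ {s : Finset α} {M : α} (hM : ∀ x ∈ s, x < M) (k : ℕ) :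
    qSubsetSum q₁ q₂ (insert M s) (k + 1) =
      q₁ ^ (k + 1) * qSubsetSum q₁ q₂ s (k + 1) + q₂ ^ (#s - k) * qSubsetSum q₁ q₂ s k := by
  have hMs : M ∉ s := fun h => (hM M h).false
  rw [qSubsetSum, powersetCard_succ_insert hMs, sum_union, sum_image, qSubsetSum, qSubsetSum,
    mul_sum, mul_sum]
  · congr 1 <;> refine sum_congr rfl fun A hA => ?_ <;> obtain ⟨hAs, hAk⟩ := mem_powersetCard.mp hA
    · rw [upCross_insert_max hM hAs, downCross_insert_max hM hAs, hAk, pow_add]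
      ring
    · rw [upCross_insert_max_insert hM hAs, downCross_insert_max_insert hM hAs,
        card_sdiff_of_subset hAs, hAk, pow_add]
      ring
  · intro A hA B hB hAB
    rw [← erase_insert fun h => hMs ((mem_powersetCard.mp hA).1 h), hAB,
      erase_insert fun h => hMs ((mem_powersetCard.mp hB).1 h)]
  · refine disjoint_left.mpr fun A hA hA' => ?_
    obtain ⟨B, -, rfl⟩ := mem_image.mp hA'
    exact hMs ((mem_powersetCard.mp hA).1 (mem_insert_self M B))

theorem qSubsetSum_eq_qbin {q₁ q₂ : F} (hq : ∀ m : ℕ, 1 ≤ m → qint q₁ q₂ m ≠ 0)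
    (s : Finset α) {k : ℕ} (hk : k ≤ #s) : qSubsetSum q₁ q₂ s k = qbin q₁ q₂ #s k := by
  induction s using Finset.induction_on_max generalizing k with
  | empty => simp_all [qSubsetSum_zero, qbin_zero_right hq]
  | insert M s hM ih =>
    have hMs : M ∉ s := fun h => (hM M h).false
    rw [card_insert_of_notMem hMs] at hk ⊢
    obtain _ | k := k
    · rw [qSubsetSum_zero, qbin_zero_right hq]
    rw [qSubsetSum_insert_max_succ q₁ q₂ hM, ih (k := k) (by omega)]
    rcases Nat.lt_or_ge k #s with hks | hks
    · rw [ih (k := k + 1) hks, qbin_succ_succ hq hks]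
      ring
    · obtain rfl : k = #s := by omega
      rw [qSubsetSum, powersetCard_eq_empty.mpr (by omega), sum_empty, Nat.sub_self,
        qbin_self hq, qbin_self hq]
      ring

end GaussianSubsetSum

@[simp] lemma Fin.not_last_lt_castSucc {n : ℕ} (x : Fin n) : ¬ Fin.last n < x.castSucc :=
  (Fin.castSucc_lt_last x).not_gt

section JoinAtMax

variable {n : ℕ}

lemma card_compl_fin (A : Finset (Fin n)) : #Aᶜ = n - #A := by
  rw [card_compl, Fintype.card_fin]

/-- Positions `0, …, #A - 1` (left of the maximum), `#A` (the maximum) and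
`#A + 1, …, n` (right of it). -/
def posEquiv (A : Finset (Fin n)) : Fin #A ⊕ Unit ⊕ Fin (n - #A) ≃ Fin (n + 1) :=
  ((Equiv.refl _).sumCongr
      ((finOneEquiv.symm.sumCongr (Equiv.refl _)).trans finSumFinEquiv)).trans
    (finSumFinEquiv.trans (finCongr (by have := A.card_le_univ; simp at this; omega)))

noncomputable def valEquiv (A : Finset (Fin n)) : Fin #A ⊕ Unit ⊕ Fin (n - #A) ≃ Fin (n + 1) :=
  Equiv.ofBijective
    (Sum.elim (fun u => (A.orderEmbOfFin rfl u).castSucc)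
      (Sum.elim (fun _ => Fin.last n) fun v => (Aᶜ.orderEmbOfFin (card_compl_fin A) v).castSucc))
    ((Fintype.bijective_iff_injective_and_card _).mpr ⟨by
      refine ((Fin.castSucc_injective _).comp (A.orderEmbOfFin rfl).injective).sumElim
        (Function.Injective.sumElim (fun _ _ _ => rfl)
          ((Fin.castSucc_injective _).comp (Aᶜ.orderEmbOfFin (card_compl_fin A)).injective)
          fun _ _ => (Fin.castSucc_lt_last _).ne') ?_
      rintro u (_ | v) h
      · exact (Fin.castSucc_lt_last _).ne h
      · simp only [Function.comp_apply, Sum.elim_inr, Fin.castSucc_inj] at h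
        exact mem_compl.mp (h ▸ Aᶜ.orderEmbOfFin_mem _ v) (A.orderEmbOfFin_mem rfl u),
      by have := A.card_le_univ; simp at this ⊢; omega⟩)

/-- The permutation `L (n+1) R` of `Fin (n + 1)`, where `L` is `σ` relabelled by the values in
`A` and `R` is `τ` relabelled by the values in `Aᶜ`. -/
noncomputable def joinAtMax (A : Finset (Fin n)) (σ : Equiv.Perm (Fin #A))
    (τ : Equiv.Perm (Fin (n - #A))) : Equiv.Perm (Fin (n + 1)) :=
  (posEquiv A).symm.trans ((σ.sumCongr ((Equiv.refl Unit).sumCongr τ)).trans (valEquiv A))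

variable {A : Finset (Fin n)} {σ : Equiv.Perm (Fin #A)} {τ : Equiv.Perm (Fin (n - #A))}

lemma posEquiv_lt_posEquiv {x y : Fin #A ⊕ Unit ⊕ Fin (n - #A)} :
    posEquiv A x < posEquiv A y ↔ Sum.Lex (· < ·) (Sum.Lex (· < ·) (· < ·)) x y := by
  rcases x with u | _ | v <;> rcases y with u' | _ | v' <;>
    simp [← Fin.val_fin_lt, posEquiv] <;> omega

@[simp] lemma joinAtMax_left (u : Fin #A) :
    joinAtMax A σ τ (posEquiv A (.inl u)) = (A.orderEmbOfFin rfl (σ u)).castSucc := by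
  simp [joinAtMax, valEquiv]

@[simp] lemma joinAtMax_mid (x : Unit) :
    joinAtMax A σ τ (posEquiv A (.inr (.inl x))) = Fin.last n := by
  simp [joinAtMax, valEquiv]

@[simp] lemma joinAtMax_right (v : Fin (n - #A)) :
    joinAtMax A σ τ (posEquiv A (.inr (.inr v))) =
      (Aᶜ.orderEmbOfFin (card_compl_fin A) (τ v)).castSucc := by
  simp [joinAtMax, valEquiv]

lemma sum_card_filter_compl_eq (σ : Equiv.Perm (Fin #A)) (τ : Equiv.Perm (Fin (n - #A)))
    (r : Fin n → Fin n → Prop) [DecidableRel r] :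
    ∑ a ∈ A, #{b ∈ Aᶜ | r a b} = ∑ u, ∑ v,
      if r (A.orderEmbOfFin rfl (σ u)) (Aᶜ.orderEmbOfFin (card_compl_fin A) (τ v)) then 1
      else 0 := by
  rw [← sum_coe_sort A, ← (σ.trans (A.orderIsoOfFin rfl).toEquiv).sum_comp]
  refine Fintype.sum_congr _ _ fun u => ?_
  rw [card_filter, ← sum_coe_sort Aᶜ,
    ← (τ.trans (Aᶜ.orderIsoOfFin (card_compl_fin A)).toEquiv).sum_comp]
  simp only [Equiv.trans_apply, OrderIso.coe_toEquiv, coe_orderIsoOfFin_apply]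
  rfl

lemma S1_joinAtMax : S1 (joinAtMax A σ τ) = S1 σ + S1 τ + #A := by
  simp only [S1, card_filter, Fintype.sum_prod_type, ← (posEquiv A).sum_comp,
    ← (posEquiv A).forall_congr_right, Fintype.sum_sum_type, Sum.forall, posEquiv_lt_posEquiv]
  simp [sum_add_distrib]
  ring

lemma S2_joinAtMax : S2 (joinAtMax A σ τ) = S2 σ + S2 τ + (n - #A) := by
  simp only [S2, card_filter, Fintype.sum_prod_type, ← (posEquiv A).sum_comp,
    ← (posEquiv A).forall_congr_right, Fintype.sum_sum_type, Sum.forall, posEquiv_lt_posEquiv]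
  simp
  ring

lemma T1_joinAtMax : T1 (joinAtMax A σ τ) = T1 σ + T1 τ + upCross univ A := by
  rw [upCross, ← compl_eq_univ_sdiff, sum_card_filter_compl_eq σ τ]
  simp only [T1, card_filter, Fintype.sum_prod_type, ← (posEquiv A).sum_comp,
    ← (posEquiv A).forall_congr_right, Fintype.sum_sum_type, Sum.forall, posEquiv_lt_posEquiv]
  simp [sum_add_distrib]
  ring

lemma T2_joinAtMax : T2 (joinAtMax A σ τ) = T2 σ + T2 τ + downCross univ A := by
  rw [downCross, ← compl_eq_univ_sdiff, sum_card_filter_compl_eq σ τ]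
  simp only [T2, card_filter, Fintype.sum_prod_type, ← (posEquiv A).sum_comp,
    ← (posEquiv A).forall_congr_right, Fintype.sum_sum_type, Sum.forall, posEquiv_lt_posEquiv]
  simp [sum_add_distrib]
  ring

lemma mem_iff_joinAtMax_symm_lt (x : Fin n) :
    x ∈ A ↔ (joinAtMax A σ τ).symm x.castSucc < (joinAtMax A σ τ).symm (Fin.last n) := by
  have hmid : (joinAtMax A σ τ).symm (Fin.last n) = posEquiv A (.inr (.inl ())) := by
    rw [Equiv.symm_apply_eq, joinAtMax_mid]
  rw [hmid]
  by_cases hx : x ∈ A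
  · obtain ⟨u, rfl⟩ : x ∈ Set.range (A.orderEmbOfFin rfl) := by
      rwa [range_orderEmbOfFin]
    have hu : (joinAtMax A σ τ).symm (A.orderEmbOfFin rfl u).castSucc =
        posEquiv A (.inl (σ.symm u)) := by
      rw [Equiv.symm_apply_eq, joinAtMax_left, Equiv.apply_symm_apply]
    simp [hu, posEquiv_lt_posEquiv, hx]
  · obtain ⟨v, rfl⟩ : x ∈ Set.range (Aᶜ.orderEmbOfFin (card_compl_fin A)) := by
      rw [range_orderEmbOfFin, coe_compl]; exact hx
    have hv : (joinAtMax A σ τ).symm (Aᶜ.orderEmbOfFin (card_compl_fin A) v).castSucc =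
        posEquiv A (.inr (.inr (τ.symm v))) := by
      rw [Equiv.symm_apply_eq, joinAtMax_right, Equiv.apply_symm_apply]
    simp [hv, posEquiv_lt_posEquiv, hx]

variable (n) in
lemma joinAtMax_injective : Function.Injective
    fun x : Σ A : Finset (Fin n), Equiv.Perm (Fin #A) × Equiv.Perm (Fin (n - #A)) =>
      joinAtMax x.1 x.2.1 x.2.2 := by
  rintro ⟨A, σ, τ⟩ ⟨B, σ', τ'⟩ (h : joinAtMax A σ τ = joinAtMax B σ' τ')
  obtain rfl : A = B := by
    ext x
    rw [mem_iff_joinAtMax_symm_lt (σ := σ) (τ := τ), mem_iff_joinAtMax_symm_lt (σ := σ') (τ := τ'),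
      h]
  have hσ : σ = σ' := Equiv.ext fun u => by
    simpa using congr($h (posEquiv A (.inl u)))
  have hτ : τ = τ' := Equiv.ext fun v => by
    simpa using congr($h (posEquiv A (.inr (.inr v))))
  rw [hσ, hτ]

variable (n) in
lemma card_sigma_perm_perm :
    Fintype.card (Σ A : Finset (Fin n), Equiv.Perm (Fin #A) × Equiv.Perm (Fin (n - #A))) =
      (n + 1).factorial := by
  simp only [Fintype.card_sigma, Fintype.card_prod, Fintype.card_perm, Fintype.card_fin]
  rw [← powerset_univ, sum_powerset_apply_card fun k => k.factorial * (n - k).factorial,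
    card_univ, Fintype.card_fin]
  have hterm : ∀ k ∈ range (n + 1),
      n.choose k • (k.factorial * (n - k).factorial) = n.factorial := fun k hk => by
    rw [smul_eq_mul, ← mul_assoc,
      Nat.choose_mul_factorial_mul_factorial (by simpa [Nat.lt_succ_iff] using hk)]
  rw [sum_congr rfl hterm, sum_const, card_range, smul_eq_mul, Nat.factorial_succ]

variable (n) in
lemma joinAtMax_bijective : Function.Bijective
    fun x : Σ A : Finset (Fin n), Equiv.Perm (Fin #A) × Equiv.Perm (Fin (n - #A)) =>
      joinAtMax x.1 x.2.1 x.2.2 :=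
  (Fintype.bijective_iff_injective_and_card _).mpr
    ⟨joinAtMax_injective n, by rw [card_sigma_perm_perm, Fintype.card_perm, Fintype.card_fin]⟩

end JoinAtMax

section Recursion

variable (p₁ p₂ q₁ q₂ : F)

def statWeight {n : ℕ} (π : Equiv.Perm (Fin n)) : F :=
  p₁ ^ S1 π * p₂ ^ S2 π * q₁ ^ T1 π * q₂ ^ T2 π

lemma Fgen_eq_sum_statWeight (n : ℕ) :
    Fgen p₁ p₂ q₁ q₂ n = ∑ π : Equiv.Perm (Fin n), statWeight p₁ p₂ q₁ q₂ π :=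
  rfl

lemma statWeight_joinAtMax {n : ℕ} (A : Finset (Fin n)) (σ : Equiv.Perm (Fin #A))
    (τ : Equiv.Perm (Fin (n - #A))) :
    statWeight p₁ p₂ q₁ q₂ (joinAtMax A σ τ) =
      q₁ ^ upCross univ A * q₂ ^ downCross univ A * p₁ ^ #A * p₂ ^ (n - #A) *
        (statWeight p₁ p₂ q₁ q₂ σ * statWeight p₁ p₂ q₁ q₂ τ) := by
  simp only [statWeight, S1_joinAtMax, S2_joinAtMax, T1_joinAtMax, T2_joinAtMax, pow_add]
  ring

lemma Fgen_succ_eq_sum_finset (n : ℕ) :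
    Fgen p₁ p₂ q₁ q₂ (n + 1) = ∑ A : Finset (Fin n),
      q₁ ^ upCross univ A * q₂ ^ downCross univ A * p₁ ^ #A * p₂ ^ (n - #A) *
        (Fgen p₁ p₂ q₁ q₂ #A * Fgen p₁ p₂ q₁ q₂ (n - #A)) := by
  rw [Fgen_eq_sum_statWeight, ← (joinAtMax_bijective n).sum_comp, Fintype.sum_sigma]
  refine sum_congr rfl fun A _ => ?_
  rw [Fintype.sum_prod_type, Fgen_eq_sum_statWeight, Fgen_eq_sum_statWeight, sum_mul_sum, mul_sum]
  simp only [statWeight_joinAtMax, mul_sum]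

end Recursion

/-- The recursion
`F_{n+1} = ∑_{k=0}^{n} qbin(n,k;q₁,q₂) p₁^k p₂^{n-k} F_k F_{n-k}`
for the joint distribution of `S₁, S₂, T₁, T₂` (over any field in which the
`(q₁,q₂)`-integers, and hence the `(q₁,q₂)`-factorials, are nonzero). -/
theorem Fgen_recursion (p₁ p₂ q₁ q₂ : F)
    (hq : ∀ m : ℕ, 1 ≤ m → qint q₁ q₂ m ≠ 0) (n : ℕ) :
    Fgen p₁ p₂ q₁ q₂ (n + 1) =
      ∑ k ∈ range (n + 1),
        qbin q₁ q₂ n k * p₁ ^ k * p₂ ^ (n - k) *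
          Fgen p₁ p₂ q₁ q₂ k * Fgen p₁ p₂ q₁ q₂ (n - k) := by
  rw [Fgen_succ_eq_sum_finset, ← powerset_univ, sum_powerset, card_univ, Fintype.card_fin]
  refine sum_congr rfl fun k hk => ?_
  have hqbin : qbin q₁ q₂ n k = qSubsetSum q₁ q₂ (univ : Finset (Fin n)) k := by
    rw [qSubsetSum_eq_qbin hq univ (by simpa [Nat.lt_succ_iff] using hk), card_univ,
      Fintype.card_fin]
  rw [hqbin, qSubsetSum, sum_mul, sum_mul, sum_mul, sum_mul]
  refine sum_congr rfl fun A hA => ?_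
  rw [(mem_powersetCard.mp hA).2]
  ring
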